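/- arXiv:2002.06526 — 2 statements merged into one kernel-verified Lean document; each statement's English description precedes it below -/
import Mathlib

section
/- Let D be a locally finite division ring with center F, and let x be an element of the derived subgroup of the multiplicative group D* (i.e., x is a product of multiplicative commutators of elements of D*). If x^n ∈ F for some positive integer n, then x has finite multiplicative order. -/
/-- The carrier of a subfield containing the center, as a submodule over the center. -/
def Subfield.centerSubmodule {D : Type*} [DivisionRing D] (E : Subfield D)
    (hE : (Subring.center D : Set D) ⊆ E) : Submodule (Subring.center D) D where
  carrier := E
  add_mem' := fun ha hb => E.add_mem ha hb
  zero_mem' := E.zero_mem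
  smul_mem' := fun c x hx => by
    exact E.mul_mem (hE c.2) hx

/-- A division ring `D` is locally finite if, for every finite subset `S` of `D`, the
division subring generated by the center together with `S` is a finite-dimensional
vector space over the center. -/
def IsLocallyFiniteDivisionRing (D : Type*) [DivisionRing D] : Prop :=
  ∀ S : Finset D,
    FiniteDimensional (Subring.center D)
      ((Subfield.closure ((Subring.center D : Set D) ∪ (S : Set D))).centerSubmodule
        (Set.union_subset_iff.mp Subfield.subset_closure).1)

/-!
A product of commutators in `Dˣ` involves finitely many elements, so it is already a product of
commutators of units of the subfield `E` generated over the centre `F` by them, and `E` is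
finite-dimensional over `F`, say of dimension `m`. The norm `N : E → F`, the determinant of left
multiplication, is multiplicative with commutative target, so it kills commutators and `N x = 1`.
Hence `c = xⁿ ∈ F` satisfies `cᵐ = N c = (N x)ⁿ = 1`, and `x ^ (n * m) = 1`.
-/

theorem Subgroup.exists_mem_commutator_of_monotone {G ι : Type*} [Group G] [Preorder ι]
    [IsDirectedOrder ι] [Nonempty ι] {H : ι → Subgroup G} (hH : Monotone H)
    (hcover : ∀ g, ∃ i, g ∈ H i) {x : G} (hx : x ∈ _root_.commutator G) :
    ∃ i, x ∈ ⁅H i, H i⁆ := by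
  have hle : _root_.commutator G ≤ ⨆ i, ⁅H i, H i⁆ := by
    rw [_root_.commutator_def, Subgroup.commutator_le]
    intro g _ h _
    obtain ⟨i, hi⟩ := hcover g
    obtain ⟨j, hj⟩ := hcover h
    obtain ⟨k, hik, hjk⟩ := directed_of (· ≤ ·) i j
    exact Subgroup.mem_iSup_of_mem k <| Subgroup.commutator_mem_commutator (hH hik hi) (hH hjk hj)
  have hdir : Directed (· ≤ ·) fun i ↦ ⁅H i, H i⁆ :=
    Monotone.directed_le fun i j hij ↦ Subgroup.commutator_mono (hH hij) (hH hij)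
  exact (Subgroup.mem_iSup_of_directed hdir).mp (hle hx)

section Norm

variable {F A : Type*} [Field F] [Ring A] [Algebra F A]

theorem Algebra.norm_eq_one_of_mem_commutator {u : Aˣ} (hu : u ∈ commutator Aˣ) :
    Algebra.norm F (u : A) = 1 :=
  congrArg Units.val (Abelianization.commutator_subset_ker (Units.map (Algebra.norm F)) hu)

theorem isOfFinOrder_of_norm_eq_one_of_pow_eq_algebraMap [FiniteDimensional F A] [Nontrivial A]
    {a : A} (ha : Algebra.norm F a = 1) {n : ℕ} (hn : 0 < n) {c : F}
    (hc : a ^ n = algebraMap F A c) : IsOfFinOrder a := by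
  have hcm : c ^ Module.finrank F A = 1 := by
    rw [← Algebra.norm_algebraMap, ← hc, map_pow, ha, one_pow]
  refine isOfFinOrder_iff_pow_eq_one.mpr
    ⟨n * Module.finrank F A, Nat.mul_pos hn Module.finrank_pos, ?_⟩
  rw [pow_mul, hc, ← map_pow, hcm, map_one]

end Norm

namespace Subalgebra

variable {R A : Type*} [CommSemiring R] [Ring A] [Algebra R A]

def unitsRange (B : Subalgebra R A) : Subgroup Aˣ :=
  (Units.map B.val.toMonoidHom).range

theorem unitsRange_mono : Monotone (unitsRange (R := R) (A := A)) := by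
  rintro B C hBC _ ⟨u, rfl⟩
  exact ⟨Units.map (inclusion hBC).toMonoidHom u, Units.ext rfl⟩

theorem mem_unitsRange {B : Subalgebra R A} {u : Aˣ} (hu : (u : A) ∈ B) (hu' : (↑u⁻¹ : A) ∈ B) :
    u ∈ B.unitsRange :=
  ⟨⟨⟨_, hu⟩, ⟨_, hu'⟩, Subtype.ext u.mul_inv, Subtype.ext u.inv_mul⟩, Units.ext rfl⟩

theorem exists_mem_commutator_of_mem_commutator_unitsRange {B : Subalgebra R A} {x : Aˣ}
    (hx : x ∈ ⁅B.unitsRange, B.unitsRange⁆) : ∃ u ∈ commutator Bˣ, ((u : B) : A) = x := by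
  rw [unitsRange, MonoidHom.range_eq_map, ← Subgroup.map_commutator] at hx
  obtain ⟨u, hu, rfl⟩ := hx
  exact ⟨u, hu, rfl⟩

end Subalgebra

namespace IsLocallyFiniteDivisionRing

variable {D : Type*} [DivisionRing D]

def localSubalgebra (S : Finset D) : Subalgebra (Subring.center D) D :=
  { Subfield.closure ((Subring.center D : Set D) ∪ (S : Set D)) with
    algebraMap_mem' := fun c ↦ Subfield.subset_closure (Or.inl c.2) }

theorem localSubalgebra_mono : Monotone (localSubalgebra (D := D)) := fun _ _ hST ↦
  Subfield.closure_mono (Set.union_subset_union_right _ (Finset.coe_subset.mpr hST))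

theorem finiteDimensional_localSubalgebra (hD : IsLocallyFiniteDivisionRing D) (S : Finset D) :
    FiniteDimensional (Subring.center D) (localSubalgebra S) :=
  have : FiniteDimensional (Subring.center D) (Subalgebra.toSubmodule (localSubalgebra S)) := hD S
  Module.Finite.equiv (Subalgebra.toSubmoduleEquiv (localSubalgebra S))

theorem mem_unitsRange_localSubalgebra_singleton (u : Dˣ) :
    u ∈ (localSubalgebra {(u : D)}).unitsRange := by
  have hu : (u : D) ∈ localSubalgebra {(u : D)} :=
    Subfield.subset_closure (Or.inr (Finset.mem_coe.mpr (Finset.mem_singleton_self _)))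
  refine Subalgebra.mem_unitsRange hu ?_
  rw [Units.val_inv_eq_inv_val]
  exact Subfield.inv_mem _ hu

theorem exists_finset_mem_commutator_unitsRange {x : Dˣ} (hx : x ∈ commutator Dˣ) :
    ∃ S : Finset D, x ∈ ⁅(localSubalgebra S).unitsRange, (localSubalgebra S).unitsRange⁆ :=
  Subgroup.exists_mem_commutator_of_monotone
    (Subalgebra.unitsRange_mono.comp localSubalgebra_mono)
    (fun u ↦ ⟨_, mem_unitsRange_localSubalgebra_singleton u⟩) hx

end IsLocallyFiniteDivisionRing

/-- Let `D` be a locally finite division ring with center `F`, and let `x` be an element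
of the derived subgroup of `Dˣ`.  If `x ^ n ∈ F` for some positive integer `n`, then `x`
has finite multiplicative order. -/
theorem stmt3 {D : Type*} [DivisionRing D] (hD : IsLocallyFiniteDivisionRing D)
    (x : Dˣ) (hx : x ∈ commutator Dˣ)
    (n : ℕ) (hn : 0 < n) (hxn : ((x : D)) ^ n ∈ Subring.center D) :
    IsOfFinOrder x := by
  obtain ⟨S, hS⟩ := IsLocallyFiniteDivisionRing.exists_finset_mem_commutator_unitsRange hx
  set A := IsLocallyFiniteDivisionRing.localSubalgebra S
  obtain ⟨u, hu, hux⟩ := Subalgebra.exists_mem_commutator_of_mem_commutator_unitsRange hS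
  have : FiniteDimensional (Subring.center D) A := hD.finiteDimensional_localSubalgebra S
  have hpow : (u : A) ^ n = algebraMap (Subring.center D) A ⟨(x : D) ^ n, hxn⟩ :=
    Subtype.ext (by simp only [Subalgebra.coe_pow, Subalgebra.coe_algebraMap, hux]; rfl)
  have hu_fin : IsOfFinOrder (u : A) :=
    isOfFinOrder_of_norm_eq_one_of_pow_eq_algebraMap
      (Algebra.norm_eq_one_of_mem_commutator hu) hn hpow
  rw [← Units.isOfFinOrder_val, ← hux]
  exact A.val.toMonoidHom.isOfFinOrder hu_fin
end

section
/- Let D be a division ring with center F, let M be a subgroup of the multiplicative group D*, and let C be an abelian normal subgroup of M. If α ∈ C is algebraic over F, then the conjugacy class α^M = { m α m^{-1} : m ∈ M } of α in M is finite; that is, α is an FC-element of M. -/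
/-- Conjugation by a unit as an algebra automorphism over the center. -/
private def conjAlgHom {D : Type*} [DivisionRing D] (u : Dˣ) :
    D →ₐ[Subring.center D] D where
  toFun x := ↑u * x * ↑u⁻¹
  map_one' := by simp
  map_mul' x y := by
    simp only [mul_assoc]
    rw [Units.inv_mul_cancel_left]
  map_zero' := by simp
  map_add' x y := by noncomm_ring
  commutes' c := by
    have hc : (↑u : D) * c = (c : D) * u :=
      (Subring.mem_center_iff.mp c.2 u)
    show ↑u * (c : D) * ↑u⁻¹ = (c : D)
    rw [hc, mul_assoc, Units.mul_inv, mul_one]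

/-- Let `D` be a division ring with center `F`, let `M` be a subgroup of `Dˣ`, and let
`C` be an abelian normal subgroup of `M`.  If `α ∈ C` is algebraic over `F`, then the
conjugacy class `{ m * α * m⁻¹ : m ∈ M }` of `α` in `M` is finite; that is, `α` is an
FC-element of `M`. -/
theorem stmt8 {D : Type*} [DivisionRing D] (M : Subgroup Dˣ)
    (C : Subgroup ↥M) (hC : C.Normal)
    (hcomm : ∀ a ∈ C, ∀ b ∈ C, a * b = b * a)
    (α : ↥M) (hα : α ∈ C)
    (halg : IsAlgebraic (Subring.center D) (((α : Dˣ) : D))) :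
    {y : ↥M | ∃ m : ↥M, y = m * α * m⁻¹}.Finite := by
  classical
  obtain ⟨p, hp0, hproot⟩ := halg
  -- The set of conjugates of α (in D), together with the center.
  set S : Set D :=
    {d : D | ∃ m : ↥M, d = (((m * α * m⁻¹ : ↥M) : Dˣ) : D)} ∪ (Subring.center D : Set D)
    with hSdef
  -- all elements of S commute pairwise
  have hconjC : ∀ m : ↥M, m * α * m⁻¹ ∈ C := fun m => hC.conj_mem α hα m
  have hScomm : ∀ x ∈ S, ∀ y ∈ S, x * y = y * x := by
    rintro x (⟨m, rfl⟩ | hx) y (⟨n, rfl⟩ | hy)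
    · exact_mod_cast congrArg (fun z : ↥M => ((z : Dˣ) : D))
        (hcomm _ (hconjC m) _ (hconjC n))
    · exact ((Subring.mem_center_iff.mp hy) _)
    · exact ((Subring.mem_center_iff.mp hx) _).symm
    · exact ((Subring.mem_center_iff.mp hy) _)
  letI : CommRing (Subring.closure S) := Subring.closureCommRingOfComm hScomm
  haveI : IsDomain (Subring.closure S) := by
    refine NoZeroDivisors.to_isDomain _
  -- embed the center into the closure
  have hcsub : ∀ c : Subring.center D, (c : D) ∈ Subring.closure S := fun c =>
    Subring.subset_closure (Or.inr c.2)
  let g : Subring.center D →+* Subring.closure S :=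
    ((Subring.center D).subtype).codRestrict (Subring.closure S) hcsub
  have hginj : Function.Injective g := by
    intro a b hab
    have := congrArg (fun x : Subring.closure S => (x : D)) hab
    exact Subtype.ext this
  set p' : Polynomial (Subring.closure S) := p.map g with hp'def
  have hp'0 : p' ≠ 0 := by
    simpa [hp'def, Polynomial.map_ne_zero_iff hginj] using hp0
  -- each conjugate is a root of p'
  have hroot : ∀ m : ↥M,
      ∃ hmem : (((m * α * m⁻¹ : ↥M) : Dˣ) : D) ∈ Subring.closure S,
        p'.IsRoot ⟨_, hmem⟩ := by
    intro m
    have hmem : (((m * α * m⁻¹ : ↥M) : Dˣ) : D) ∈ Subring.closure S :=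
      Subring.subset_closure (Or.inl ⟨m, rfl⟩)
    refine ⟨hmem, ?_⟩
    apply Subtype.val_injective
    show ((Subring.closure S).subtype (p'.eval ⟨_, hmem⟩)) = (0 : D)
    rw [hp'def, Polynomial.eval_map, Polynomial.hom_eval₂]
    have hcomp : ((Subring.closure S).subtype).comp g = (Subring.center D).subtype := rfl
    rw [hcomp]
    have hcoe : ((Subring.closure S).subtype ⟨_, hmem⟩ : D)
        = conjAlgHom ((m : Dˣ)) (((α : Dˣ) : D)) := by
      show (((m * α * m⁻¹ : ↥M) : Dˣ) : D)
        = ↑(m : Dˣ) * ((α : Dˣ) : D) * ↑(m : Dˣ)⁻¹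
      push_cast
      ring_nf
    rw [hcoe]
    have haev : Polynomial.eval₂ (Subring.center D).subtype
        (conjAlgHom ((m : Dˣ)) (((α : Dˣ) : D))) p
        = Polynomial.aeval (conjAlgHom ((m : Dˣ)) (((α : Dˣ) : D))) p := rfl
    rw [haev, Polynomial.aeval_algHom_apply, hproot, map_zero]
  -- finiteness of the root set
  have hfin : ({x : Subring.closure S | p'.IsRoot x}).Finite :=
    p'.finite_setOf_isRoot hp'0
  have hfin2 : ((fun x : Subring.closure S => (x : D)) ''
      {x : Subring.closure S | p'.IsRoot x}).Finite := hfin.image _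
  -- now transfer back to M
  have hinj : Function.Injective (fun y : ↥M => ((y : Dˣ) : D)) := by
    intro a b hab
    exact Subtype.ext (Units.ext hab)
  apply Set.Finite.of_finite_image (f := fun y : ↥M => ((y : Dˣ) : D))
  · apply hfin2.subset
    rintro _ ⟨y, ⟨m, rfl⟩, rfl⟩
    obtain ⟨hmem, hr⟩ := hroot m
    exact ⟨⟨_, hmem⟩, hr, rfl⟩
  · exact hinj.injOn
end
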